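/- Let Δ₆ ⊂ ℝ² be the triangle with vertices (0,0), (7/2,7√3/2), (0,7√3/2), and μ the measure with density [x(−3x/2+√3y/2)(−x/2+√3y/2)(x/2+√3y/2)(3x/2+√3y/2)(√3y)]² on Δ₆. Then the barycenter of Δ₆ with respect to μ equals (139601/79360, 49√3/15). -/

import Mathlib

/-!
The triangle is `{0 ≤ y ≤ 7√3/2, 0 ≤ x ≤ y/√3}`, and the density is a homogeneous polynomial of
degree 12. Integrating over horizontal slices and rescaling the slice at height `y` to the unit
segment at height `√3`, a continuous `F` homogeneous of degree `k` has
`∫_Δ F = (√3 a^(k+2)/(k+2)) ∫₀¹ F(t, √3) dt` with `a = 7/2`. Applied to the density (`k = 12`) and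
to the density times `p` (`k = 13`), this gives the barycenter `(14a/15) (m₁/m₀, √3)`, where
`m₀ = ∫₀¹ ρ(t,√3) dt = 2511/154` and `m₁ = ∫₀¹ t ρ(t,√3) dt = 8991/1024`.
-/

open MeasureTheory Real

noncomputable def dens (p : ℝ × ℝ) : ℝ :=
  (p.1 * (-3 * p.1 / 2 + Real.sqrt 3 * p.2 / 2) * (-p.1 / 2 + Real.sqrt 3 * p.2 / 2) * (p.1 / 2 + Real.sqrt 3 * p.2 / 2) * (3 * p.1 / 2 + Real.sqrt 3 * p.2 / 2) * (Real.sqrt 3 * p.2)) ^ 2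

open Set

section
variable {E : Type*} [NormedAddCommGroup E] [NormedSpace ℝ E]

theorem setIntegral_eq_intervalIntegral_intervalIntegral {c d : ℝ} (hcd : c ≤ d) {g h : ℝ → ℝ}
    (hgh : ∀ y ∈ Icc c d, g y ≤ h y) {F : ℝ × ℝ → E}
    (hR : MeasurableSet {p : ℝ × ℝ | p.2 ∈ Icc c d ∧ p.1 ∈ Icc (g p.2) (h p.2)})
    (hF : IntegrableOn F {p : ℝ × ℝ | p.2 ∈ Icc c d ∧ p.1 ∈ Icc (g p.2) (h p.2)}) :
    ∫ p in {p : ℝ × ℝ | p.2 ∈ Icc c d ∧ p.1 ∈ Icc (g p.2) (h p.2)}, F p =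
      ∫ y in c..d, ∫ x in g y..h y, F (x, y) := by
  set R := {p : ℝ × ℝ | p.2 ∈ Icc c d ∧ p.1 ∈ Icc (g p.2) (h p.2)}
  have hFR : Integrable (R.indicator F) (volume.prod volume) := by
    rw [← Measure.volume_eq_prod]; exact hF.integrable_indicator hR
  have hslice : ∀ y, ∫ x, R.indicator F (x, y) =
      (Icc c d).indicator (fun y ↦ ∫ x in g y..h y, F (x, y)) y := by
    intro y
    by_cases hy : y ∈ Icc c d
    · have hfun : (fun x ↦ R.indicator F (x, y)) =
          (Icc (g y) (h y)).indicator (fun x ↦ F (x, y)) := by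
        ext x
        by_cases hx : x ∈ Icc (g y) (h y)
        · rw [indicator_of_mem hx, indicator_of_mem (show (x, y) ∈ R from ⟨hy, hx⟩)]
        · rw [indicator_of_notMem hx, indicator_of_notMem (fun hxy ↦ hx hxy.2)]
      rw [indicator_of_mem hy, hfun, integral_indicator measurableSet_Icc,
        intervalIntegral.integral_of_le (hgh y hy), integral_Icc_eq_integral_Ioc]
    · have hfun : (fun x ↦ R.indicator F (x, y)) = fun _ ↦ 0 :=
        funext fun x ↦ indicator_of_notMem (fun hxy ↦ hy hxy.1) _
      rw [indicator_of_notMem hy, hfun, integral_zero]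
  rw [← integral_indicator hR, Measure.volume_eq_prod, integral_prod_symm _ hFR]
  simp only [hslice]
  rw [integral_indicator measurableSet_Icc, intervalIntegral.integral_of_le hcd,
    integral_Icc_eq_integral_Ioc]

theorem convexHull_triangle_eq {s a : ℝ} (hs : 0 < s) (ha : 0 < a) :
    convexHull ℝ {((0 : ℝ), (0 : ℝ)), (a, s * a), (0, s * a)} =
      {p : ℝ × ℝ | p.2 ∈ Icc 0 (s * a) ∧ p.1 ∈ Icc 0 (p.2 / s)} := by
  apply Subset.antisymm
  · refine convexHull_min ?_ ?_
    · have : 0 ≤ s * a := by positivity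
      rintro p (rfl | rfl | rfl) <;> simp [this, hs.ne', ha.le]
    · rintro p ⟨⟨hp₀, hp₁⟩, hp₂, hp₃⟩ q ⟨⟨hq₀, hq₁⟩, hq₂, hq₃⟩ α β hα hβ hαβ
      simp only [mem_ofPred_eq, Prod.fst_add, Prod.snd_add, Prod.smul_fst, Prod.smul_snd,
        smul_eq_mul, mem_Icc]
      refine ⟨⟨by positivity, ?_⟩, by positivity, ?_⟩
      · calc α * p.2 + β * q.2 ≤ α * (s * a) + β * (s * a) := by gcongr
          _ = s * a := by rw [← add_mul, hαβ, one_mul]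
      · calc α * p.1 + β * q.1 ≤ α * (p.2 / s) + β * (q.2 / s) := by gcongr
          _ = (α * p.2 + β * q.2) / s := by ring
  · rintro ⟨x, y⟩ ⟨⟨hy₀, hy₁⟩, hx₀, hx₁⟩
    have h₀ : 0 ≤ 1 - y / (s * a) := sub_nonneg.2 ((div_le_one (by positivity)).2 hy₁)
    have h₂ : 0 ≤ y / (s * a) - x / a :=
      sub_nonneg.2 (by rw [← div_div]; exact div_le_div_of_nonneg_right hx₁ ha.le)
    have hw : ∀ i ∈ Finset.univ, 0 ≤ ![1 - y / (s * a), x / a, y / (s * a) - x / a] i := by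
      intro i _
      fin_cases i
      exacts [h₀, div_nonneg hx₀ ha.le, h₂]
    have hmem := (convex_convexHull ℝ {((0 : ℝ), (0 : ℝ)), (a, s * a), (0, s * a)}).sum_mem hw
      (by simp [Fin.sum_univ_three])
      (z := ![((0 : ℝ), (0 : ℝ)), (a, s * a), (0, s * a)])
      (fun i _ ↦ subset_convexHull ℝ _ (by fin_cases i <;> simp))
    convert hmem using 1
    simp only [Fin.sum_univ_three, Matrix.cons_val_zero, Matrix.cons_val_one, Matrix.cons_val,
      Prod.smul_mk, smul_eq_mul, Prod.mk_add_mk]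
    exact Prod.ext (by field_simp; ring) (by field_simp; ring)

theorem integral_convexHull_triangle_of_homogeneous [CompleteSpace E] {s a : ℝ} (hs : 0 < s)
    (ha : 0 < a) {k : ℕ} {F : ℝ × ℝ → E} (hF : Continuous F)
    (hFk : ∀ (c : ℝ) (p : ℝ × ℝ), F (c • p) = c ^ k • F p) :
    ∫ p in convexHull ℝ {((0 : ℝ), (0 : ℝ)), (a, s * a), (0, s * a)}, F p =
      (s * a ^ (k + 2) / (k + 2)) • ∫ t in (0 : ℝ)..1, F (t, s) := by
  have hK := (toFinite {((0 : ℝ), (0 : ℝ)), (a, s * a), (0, s * a)}).isCompact_convexHull ℝ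
  -- the slice at height `y` is the slice at height `s` scaled by `y / s`
  have hslice (y : ℝ) :
      ∫ x in (0 : ℝ)..y / s, F (x, y) = (y / s) ^ (k + 1) • ∫ t in (0 : ℝ)..1, F (t, s) := by
    calc ∫ x in (0 : ℝ)..y / s, F (x, y)
        = (y / s) • ∫ t in (0 : ℝ)..1, F ((y / s) * t, y) := by
          rw [intervalIntegral.smul_integral_comp_mul_left (fun x ↦ F (x, y)), mul_zero, mul_one]
      _ = (y / s) • ∫ t in (0 : ℝ)..1, (y / s) ^ k • F (t, s) := by
          congr 1
          refine intervalIntegral.integral_congr fun t _ ↦ ?_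
          rw [← hFk, Prod.smul_mk, smul_eq_mul, smul_eq_mul, div_mul_cancel₀ y hs.ne']
      _ = (y / s) ^ (k + 1) • ∫ t in (0 : ℝ)..1, F (t, s) := by
          rw [intervalIntegral.integral_smul, smul_smul, pow_succ']
  rw [convexHull_triangle_eq hs ha] at hK ⊢
  rw [setIntegral_eq_intervalIntegral_intervalIntegral (by positivity)
    (fun y hy ↦ div_nonneg hy.1 hs.le) hK.isClosed.measurableSet
    (hF.continuousOn.integrableOn_compact hK)]
  simp_rw [hslice]
  rw [intervalIntegral.integral_smul_const, intervalIntegral.integral_comp_div (fun u ↦ u ^ (k + 1)) hs.ne',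
    zero_div, mul_div_cancel_left₀ a hs.ne', integral_pow, smul_eq_mul]
  congr 1
  push_cast
  ring

theorem intervalIntegral.integral_pair {F : Type*} [NormedAddCommGroup F] [NormedSpace ℝ F]
    [CompleteSpace E] [CompleteSpace F] {μ : Measure ℝ} {f : ℝ → E} {g : ℝ → F} {a b : ℝ}
    (hf : IntervalIntegrable f μ a b) (hg : IntervalIntegrable g μ a b) :
    ∫ x in a..b, (f x, g x) ∂μ = (∫ x in a..b, f x ∂μ, ∫ x in a..b, g x ∂μ) := by
  simp only [intervalIntegral, _root_.integral_pair hf.1 hg.1,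
    _root_.integral_pair hf.2 hg.2, Prod.mk_sub_mk]

end

theorem continuous_dens : Continuous dens := by
  unfold dens; fun_prop

theorem dens_smul (c : ℝ) (p : ℝ × ℝ) : dens (c • p) = c ^ 12 * dens p := by
  simp only [dens, Prod.smul_fst, Prod.smul_snd, smul_eq_mul]
  ring

theorem dens_mk_sqrt_three (t : ℝ) :
    dens (t, √3) = 729 / 256 * t ^ 2 * (1 - t ^ 2) ^ 2 * (9 - t ^ 2) ^ 2 := by
  simp only [dens, mul_self_sqrt (by norm_num : (0 : ℝ) ≤ 3)]
  ring

theorem integral_dens_mk_sqrt_three : ∫ t in (0 : ℝ)..1, dens (t, √3) = 2511 / 154 := by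
  rw [intervalIntegral.integral_congr (g := fun t ↦ 59049 / 256 * t ^ 2 - 32805 / 64 * t ^ 4 +
    43011 / 128 * t ^ 6 - 3645 / 64 * t ^ 8 + 729 / 256 * t ^ 10) fun t _ ↦ by rw [dens_mk_sqrt_three]; ring]
  simp (disch := exact (Continuous.intervalIntegrable (by fun_prop) _ _)) only
    [intervalIntegral.integral_add, intervalIntegral.integral_sub,
      intervalIntegral.integral_const_mul, integral_pow]
  norm_num

theorem integral_dens_mk_sqrt_three_mul : ∫ t in (0 : ℝ)..1, dens (t, √3) * t = 8991 / 1024 := by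
  rw [intervalIntegral.integral_congr (g := fun t ↦ 59049 / 256 * t ^ 3 - 32805 / 64 * t ^ 5 +
    43011 / 128 * t ^ 7 - 3645 / 64 * t ^ 9 + 729 / 256 * t ^ 11) fun t _ ↦ by rw [dens_mk_sqrt_three]; ring]
  simp (disch := exact (Continuous.intervalIntegrable (by fun_prop) _ _)) only
    [intervalIntegral.integral_add, intervalIntegral.integral_sub,
      intervalIntegral.integral_const_mul, integral_pow]
  norm_num

theorem integral_dens_mk_sqrt_three_smul :
    ∫ t in (0 : ℝ)..1, dens (t, √3) • (t, √3) = (8991 / 1024, 2511 / 154 * √3) := by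
  have hcont : Continuous fun t ↦ dens (t, √3) := continuous_dens.comp (by fun_prop)
  simp only [Prod.smul_mk, smul_eq_mul]
  rw [intervalIntegral.integral_pair (f := fun t ↦ dens (t, √3) * t)
    (g := fun t ↦ dens (t, √3) * √3)
    ((hcont.mul continuous_id').intervalIntegrable 0 1)
    ((hcont.mul continuous_const).intervalIntegrable 0 1),
    intervalIntegral.integral_mul_const, integral_dens_mk_sqrt_three, integral_dens_mk_sqrt_three_mul]

theorem stmt :
    (∫ p in (convexHull ℝ {((0:ℝ), (0:ℝ)), (7/2, 7 * Real.sqrt 3 / 2), (0, 7 * Real.sqrt 3 / 2)} : Set (ℝ × ℝ)), dens p ∂volume)⁻¹ •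
      (∫ p in (convexHull ℝ {((0:ℝ), (0:ℝ)), (7/2, 7 * Real.sqrt 3 / 2), (0, 7 * Real.sqrt 3 / 2)} : Set (ℝ × ℝ)), dens p • p ∂volume) = ((139601/79360 : ℝ), (49 * Real.sqrt 3 / 15 : ℝ)) := by
  have hs : 0 < √3 := by positivity
  have ha : (0 : ℝ) < 7 / 2 := by norm_num
  have hmoment (c : ℝ) (p : ℝ × ℝ) : dens (c • p) • c • p = c ^ 13 • dens p • p := by
    rw [dens_smul, smul_smul, smul_smul]
    congr 1
    ring
  rw [show 7 * √3 / 2 = √3 * (7 / 2) by ring,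
    integral_convexHull_triangle_of_homogeneous hs ha continuous_dens dens_smul,
    integral_convexHull_triangle_of_homogeneous (F := fun p ↦ dens p • p) hs ha
      (continuous_dens.smul continuous_id) hmoment,
    integral_dens_mk_sqrt_three, integral_dens_mk_sqrt_three_smul]
  ext <;> norm_num <;> field_simp <;> ring
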